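/- arXiv:2504.08268 — 3 statements merged into one kernel-verified Lean document; each statement's English description precedes it below -/
import Mathlib

section
/- For every positive integer k there exists a claw-free graph G of order n = k² + 3k + 3 such that: δ(G) = k + 2; α(G) = k + 1 (hence every nonempty independent set I of G satisfies |I| ≤ δ_G(I) − 1); σ_{k+1}(G) = n − 1; and every 2-factor of G has at least k + 1 cycles (so G has no 2-factor with at most k cycles). Consequently, the degree sum condition σ_{k+1}(G) ≥ n in the main theorem cannot be weakened to σ_{k+1}(G) ≥ n − 1. Such a graph is obtained from a complete graph H_0 on vertices v_1, …, v_{k+3} and k pairwise disjoint copies H_1, …, H_k of K_{k+2} by joining every vertex of H_i to v_i for each i ∈ {1, …, k}. -/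
/-- A graph is claw-free if it contains no induced subgraph isomorphic to `K_{1,3}`. -/
def ClawFree {V : Type*} (G : SimpleGraph V) : Prop :=
  ¬ ∃ v a b c : V, a ≠ b ∧ a ≠ c ∧ b ≠ c ∧
    G.Adj v a ∧ G.Adj v b ∧ G.Adj v c ∧ ¬ G.Adj a b ∧ ¬ G.Adj a c ∧ ¬ G.Adj b c

/-- A finset of vertices is an independent set of `G` if no two of its vertices
are adjacent. -/
def IsIndepFinset {V : Type*} (G : SimpleGraph V) (I : Finset V) : Prop :=
  ∀ a ∈ I, ∀ b ∈ I, ¬ G.Adj a b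

/-- A 2-factor of `G` is a 2-regular spanning subgraph of `G`. -/
def IsTwoFactor {V : Type*} (G : SimpleGraph V) (F : G.Subgraph) : Prop :=
  F.IsSpanning ∧ ∀ v : V, (F.neighborSet v).ncard = 2

/-- The vertex set of the graph `G_k`: the complete graph `H_0` on `k + 3` vertices
`v_1, …, v_{k+3}` (given by `Sum.inl`), together with `k` disjoint copies
`H_1, …, H_k` of `K_{k+2}` (the copy `H_i` consists of the vertices `Sum.inr (i, a)`). -/
abbrev GkVertex (k : ℕ) : Type := Fin (k + 3) ⊕ Fin k × Fin (k + 2)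

/-- The base relation for `G_k`: all pairs inside `H_0` are related, two vertices of the
copies are related iff they lie in the same copy `H_i`, and `v_i ∈ H_0` is related to
every vertex of the copy `H_i`. -/
def GkRel (k : ℕ) : GkVertex k → GkVertex k → Prop
  | Sum.inl _, Sum.inl _ => True
  | Sum.inr ⟨i, _⟩, Sum.inr ⟨j, _⟩ => i = j
  | Sum.inl i, Sum.inr ⟨j, _⟩ => (i : ℕ) = (j : ℕ)
  | Sum.inr _, Sum.inl _ => False

/-- The graph `G_k`, obtained from a complete graph `H_0` on vertices `v_1, …, v_{k+3}`
and `k` pairwise disjoint copies `H_1, …, H_k` of `K_{k+2}` by joining every vertex of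
`H_i` to `v_i` for each `i ∈ {1, …, k}`. -/
def Gk (k : ℕ) : SimpleGraph (GkVertex k) := SimpleGraph.fromRel (GkRel k)

/-!
Every vertex neighbourhood of `G_k` is covered by two cliques (`H_0` and the copy `H_i` hanging
off it, or `H_i` together with `v_i`), so `G_k` is claw-free; the degree and independence
statements are direct counts.

Every cycle of a 2-factor `F` meeting a copy `H_i` stays inside `H_i ∪ {v_i}`: `v_i` is the only
exit from `H_i`, and the number of `F`-edges between `H_i` and `v_i` is even by the handshake
lemma and at most `2`; if it is `0` then `H_i` is a union of cycles, and if it is `2` then so is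
`H_i ∪ {v_i}`. The cycles through `H_1, …, H_k` are therefore distinct, and none of them contains
`v_{k+3}`, which gives `k + 1` cycles.
-/

open Finset Function

namespace SimpleGraph

variable {V : Type*}

theorem clawFree_of_neighborSet_subset_union_isClique {G : SimpleGraph V}
    (h : ∀ v, ∃ s t : Set V, G.IsClique s ∧ G.IsClique t ∧ G.neighborSet v ⊆ s ∪ t) :
    ClawFree G := by
  rintro ⟨v, a, b, c, hab, hac, hbc, hva, hvb, hvc, nab, nac, nbc⟩
  obtain ⟨s, t, hs, ht, hst⟩ := h v
  -- two of the three neighbours lie in the same clique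
  rcases hst hva with ha | ha <;> rcases hst hvb with hb | hb <;> rcases hst hvc with hc | hc <;>
    first
    | exact nab (hs ha hb hab) | exact nab (ht ha hb hab)
    | exact nac (hs ha hc hac) | exact nac (ht ha hc hac)
    | exact nbc (hs hb hc hbc) | exact nbc (ht hb hc hbc)

theorem Reachable.mem_of_forall_adj_mem {G : SimpleGraph V} {S : Set V}
    (hS : ∀ u ∈ S, ∀ w, G.Adj u w → w ∈ S) {u w : V} (h : G.Reachable u w) (hu : u ∈ S) :
    w ∈ S := by
  obtain ⟨p⟩ := h
  induction p with
  | nil => exact hu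
  | cons huw _ ih => exact ih (hS _ hu _ huw)

theorem lt_card_connectedComponent [Finite V] {G : SimpleGraph V} {ι : Type*} {S : ι → Set V}
    (hS : ∀ i, ∀ u ∈ S i, ∀ w, G.Adj u w → w ∈ S i) (hdisj : Pairwise (Disjoint on S))
    {y : ι → V} (hy : ∀ i, y i ∈ S i) {x : V} (hx : ∀ i, x ∉ S i) :
    Nat.card ι < Nat.card G.ConnectedComponent := by
  have hinj : Injective fun o : Option ι => G.connectedComponentMk (o.elim x y) := by
    rintro (_ | i) (_ | j) h <;> simp only [Option.elim, ConnectedComponent.eq] at h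
    · rfl
    · exact (hx j (h.symm.mem_of_forall_adj_mem (hS j) (hy j))).elim
    · exact (hx i (h.mem_of_forall_adj_mem (hS i) (hy i))).elim
    · by_contra hij
      exact Set.disjoint_left.1 (hdisj fun e => hij (congrArg some e))
        (hy i) (h.symm.mem_of_forall_adj_mem (hS j) (hy j))
  have : Finite ι := Finite.of_injective _ (hinj.comp (Option.some_injective ι))
  calc Nat.card ι < Nat.card (Option ι) := by rw [Finite.card_option]; omega
    _ ≤ _ := Nat.card_le_card_of_injective _ hinj

theorem even_sum_card_filter_adj (G : SimpleGraph V) [DecidableRel G.Adj]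
    (A : Finset V) : Even (∑ a ∈ A, #{b ∈ A | G.Adj a b}) := by
  classical
  induction A using Finset.induction_on with
  | empty => simp
  | insert x A hx ih =>
    have hrow : ∀ a ∈ A, #{b ∈ insert x A | G.Adj a b} =
        #{b ∈ A | G.Adj a b} + if G.Adj a x then 1 else 0 := by
      intro a _
      rw [filter_insert]
      split_ifs
      · exact card_insert_of_notMem fun h => hx (mem_filter.1 h).1
      · rfl
    have hcol : ∑ a ∈ A, (if G.Adj a x then 1 else 0) = #{b ∈ A | G.Adj x b} := by
      simp_rw [← card_filter, G.adj_comm]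
    rw [sum_insert hx, sum_congr rfl hrow, sum_add_distrib, hcol, filter_insert,
      if_neg G.irrefl]
    obtain ⟨m, hm⟩ := ih
    exact ⟨m + #{b ∈ A | G.Adj x b}, by omega⟩

theorem exists_forall_adj_mem_of_ncard_neighborSet_eq_two {G : SimpleGraph V}
    (hdeg : ∀ u, (G.neighborSet u).ncard = 2) {A : Finset V} {v : V} (hv : v ∉ A)
    (hA : ∀ a ∈ A, G.neighborSet a ⊆ insert v ↑A) :
    ∃ C : Set V, (∀ u ∈ C, ∀ w, G.Adj u w → w ∈ C) ∧ ↑A ⊆ C ∧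
      C ⊆ insert v ↑A := by
  classical
  set T := {a ∈ A | G.Adj a v}
  have hrow : ∀ a ∈ A, #{b ∈ A | G.Adj a b} + (if G.Adj a v then 1 else 0) = 2 := by
    intro a ha
    have hN : G.neighborSet a = ↑({b ∈ insert v A | G.Adj a b}) := by
      ext b
      simpa using fun h => hA a ha h
    rw [← hdeg a, hN, Set.ncard_coe_finset, filter_insert]
    split_ifs
    · rw [card_insert_of_notMem fun h => hv (mem_filter.1 h).1]
    · rfl
  -- the edges between `A` and `v` are counted by `#T`, which is even by the handshake lemma
  have hT_even : Even #T := by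
    have hsum := sum_congr rfl hrow
    rw [sum_add_distrib, ← card_filter, sum_const, smul_eq_mul] at hsum
    change _ + #T = _ at hsum
    obtain ⟨m, hm⟩ := G.even_sum_card_filter_adj A
    exact ⟨#A - m, by omega⟩
  have hT_sub : (↑T : Set V) ⊆ G.neighborSet v := fun a ha => (mem_filter.1 ha).2.symm
  have hNv_fin : (G.neighborSet v).Finite := Set.finite_of_ncard_pos (by rw [hdeg]; norm_num)
  have hT_le : #T ≤ 2 := by
    rw [← hdeg v, ← Set.ncard_coe_finset]
    exact Set.ncard_le_ncard hT_sub hNv_fin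
  obtain hT0 | hT2 : #T = 0 ∨ #T = 2 := by
    obtain ⟨m, hm⟩ := hT_even
    omega
  · refine ⟨A, ?_, subset_rfl, Set.subset_insert _ _⟩
    intro a ha w haw
    rcases hA a ha haw with rfl | hw
    · rw [card_eq_zero, filter_eq_empty_iff] at hT0
      exact (hT0 ha haw).elim
    · exact hw
  · have hNv : G.neighborSet v ⊆ A := by
      rw [← Set.eq_of_subset_of_ncard_le hT_sub (by rw [hdeg, Set.ncard_coe_finset, hT2]) hNv_fin]
      exact fun a ha => (mem_filter.1 ha).1
    refine ⟨insert v A, ?_, Set.subset_insert _ _, subset_rfl⟩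
    rintro u (rfl | hu) w huw
    · exact Set.mem_insert_of_mem _ (hNv huw)
    · exact hA u hu huw

end SimpleGraph

namespace Gk

variable {k : ℕ}

@[simp] theorem adj_inl_inl {i j : Fin (k + 3)} : (Gk k).Adj (.inl i) (.inl j) ↔ i ≠ j := by
  simp [Gk, GkRel]

@[simp] theorem adj_inl_inr {j : Fin (k + 3)} {i : Fin k} {b : Fin (k + 2)} :
    (Gk k).Adj (.inl j) (.inr (i, b)) ↔ (j : ℕ) = i := by
  simp [Gk, GkRel]

@[simp] theorem adj_inr_inl {j : Fin (k + 3)} {i : Fin k} {b : Fin (k + 2)} :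
    (Gk k).Adj (.inr (i, b)) (.inl j) ↔ (j : ℕ) = i := by
  rw [SimpleGraph.adj_comm, adj_inl_inr]

@[simp] theorem adj_inr_inr {i i' : Fin k} {a b : Fin (k + 2)} :
    (Gk k).Adj (.inr (i, a)) (.inr (i', b)) ↔ i = i' ∧ a ≠ b := by
  simp only [Gk, SimpleGraph.fromRel_adj, GkRel]
  grind

def hub (i : Fin k) : GkVertex k := .inl (Fin.castAdd 3 i)

def copy (i : Fin k) : Finset (GkVertex k) := univ.image fun b => .inr (i, b)

@[simp] theorem mem_copy {i : Fin k} {x : GkVertex k} :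
    x ∈ copy i ↔ ∃ b, x = .inr (i, b) := by
  simp [copy, eq_comm]

theorem hub_notMem_copy (i : Fin k) : hub i ∉ copy i := by
  simp [hub]

theorem isClique_range_inl : (Gk k).IsClique (Set.range Sum.inl) := by
  rintro _ ⟨i, rfl⟩ _ ⟨j, rfl⟩ hij
  simpa using hij

theorem isClique_insert_hub_copy (i : Fin k) : (Gk k).IsClique (insert (hub i) ↑(copy i)) := by
  rw [SimpleGraph.isClique_insert]
  constructor
  · rintro _ ha _ hb hab
    obtain ⟨a, rfl⟩ := mem_copy.1 ha
    obtain ⟨b, rfl⟩ := mem_copy.1 hb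
    simpa using hab
  · rintro _ hb -
    obtain ⟨b, rfl⟩ := mem_copy.1 hb
    simp [hub]

theorem neighborSet_inr (i : Fin k) (a : Fin (k + 2)) :
    (Gk k).neighborSet (.inr (i, a)) = insert (hub i) ((fun b => .inr (i, b)) '' {a}ᶜ) := by
  ext (j | ⟨i', b⟩)
  · simp [hub, Fin.ext_iff]
  · simp [hub, ne_comm, and_comm]

theorem neighborSet_inr_subset (i : Fin k) (a : Fin (k + 2)) :
    (Gk k).neighborSet (.inr (i, a)) ⊆ insert (hub i) ↑(copy i) := by
  rw [neighborSet_inr]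
  exact Set.insert_subset_insert (by rintro _ ⟨b, -, rfl⟩; simp)

theorem ncard_neighborSet_inr (i : Fin k) (a : Fin (k + 2)) :
    ((Gk k).neighborSet (.inr (i, a))).ncard = k + 2 := by
  rw [neighborSet_inr, Set.ncard_insert_of_notMem (by simp [hub]),
    Set.ncard_image_of_injective _ fun b b' h => by simpa using h, Set.ncard_compl,
    Set.ncard_singleton, Nat.card_eq_fintype_card, Fintype.card_fin]
  omega

theorem image_inl_compl_subset_neighborSet (j : Fin (k + 3)) :
    Sum.inl '' {j}ᶜ ⊆ (Gk k).neighborSet (.inl j) := by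
  rintro _ ⟨j', hj', rfl⟩
  simpa [eq_comm] using hj'

theorem ncard_image_inl_compl (j : Fin (k + 3)) :
    (Sum.inl '' {j}ᶜ : Set (GkVertex k)).ncard = k + 2 := by
  rw [Set.ncard_image_of_injective _ Sum.inl_injective, Set.ncard_compl, Set.ncard_singleton,
    Nat.card_eq_fintype_card, Fintype.card_fin]
  rfl

theorem ncard_neighborSet_inl_last :
    ((Gk k).neighborSet (.inl (Fin.last (k + 2)))).ncard = k + 2 := by
  have : (Gk k).neighborSet (.inl (Fin.last (k + 2))) = Sum.inl '' {Fin.last (k + 2)}ᶜ := by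
    refine (Set.Subset.antisymm ?_ (image_inl_compl_subset_neighborSet _))
    rintro (j | ⟨i, b⟩) h
    · exact ⟨j, by simpa [eq_comm] using h, rfl⟩
    · simp only [SimpleGraph.mem_neighborSet, adj_inl_inr, Fin.val_last] at h
      omega
  rw [this, ncard_image_inl_compl]

theorem le_ncard_neighborSet (v : GkVertex k) : k + 2 ≤ ((Gk k).neighborSet v).ncard := by
  rcases v with j | ⟨i, a⟩
  · calc k + 2 = (Sum.inl '' {j}ᶜ : Set (GkVertex k)).ncard := (ncard_image_inl_compl j).symm
      _ ≤ _ := Set.ncard_le_ncard (image_inl_compl_subset_neighborSet j)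
  · exact (ncard_neighborSet_inr i a).ge

theorem clawFree : ClawFree (Gk k) := by
  refine SimpleGraph.clawFree_of_neighborSet_subset_union_isClique fun v => ?_
  rcases v with j | ⟨i, a⟩
  · by_cases hj : (j : ℕ) < k
    · refine ⟨_, _, isClique_range_inl,
        (isClique_insert_hub_copy ⟨j, hj⟩).subset (Set.subset_insert _ _), ?_⟩
      rintro (j' | ⟨i, b⟩) h
      · exact .inl ⟨j', rfl⟩
      · simp only [SimpleGraph.mem_neighborSet, adj_inl_inr] at h
        exact .inr (mem_copy.2 ⟨b, by simp [h]⟩)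
    · refine ⟨_, ∅, isClique_range_inl, SimpleGraph.isClique_empty, ?_⟩
      rintro (j' | ⟨i, b⟩) h
      · exact .inl ⟨j', rfl⟩
      · simp only [SimpleGraph.mem_neighborSet, adj_inl_inr] at h
        omega
  · exact ⟨_, ∅, isClique_insert_hub_copy i, SimpleGraph.isClique_empty,
      (neighborSet_inr_subset i a).trans Set.subset_union_left⟩

theorem card_le_of_isIndepFinset {I : Finset (GkVertex k)} (hI : IsIndepFinset (Gk k) I) :
    #I ≤ k + 1 := by
  -- `I` meets `H_0` and each copy `H_i` in at most one vertex
  have hinj : Set.InjOn (Sum.elim (fun _ => none) fun p => some p.1 : GkVertex k → Option (Fin k))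
      I := by
    rintro (j | ⟨i, a⟩) hx (j' | ⟨i', b⟩) hy h <;> simp only [Sum.elim_inl, Sum.elim_inr,
      reduceCtorEq, Option.some.injEq] at h
    · by_contra hne
      exact hI _ hx _ hy (by simpa using hne)
    · subst h
      by_contra hne
      exact hI _ hx _ hy (by simpa using hne)
  simpa using card_le_card_of_injOn _ (fun _ _ => mem_univ _) hinj

def indepSet (k : ℕ) : Finset (GkVertex k) :=
  insert (.inl (Fin.last _)) (univ.image fun i => .inr (i, 0))

theorem isIndepFinset_indepSet : IsIndepFinset (Gk k) (indepSet k) := by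
  simp only [IsIndepFinset, indepSet, mem_insert, mem_image, mem_univ, true_and]
  rintro _ (rfl | ⟨i, rfl⟩) _ (rfl | ⟨j, rfl⟩) <;> simp <;> omega

theorem card_indepSet : #(indepSet k) = k + 1 := by
  rw [indepSet, card_insert_of_notMem (by simp),
    card_image_of_injective _ fun i j h => by simpa using h, card_univ, Fintype.card_fin]

theorem sum_ncard_neighborSet_indepSet :
    ∑ v ∈ indepSet k, ((Gk k).neighborSet v).ncard = k ^ 2 + 3 * k + 2 := by
  rw [indepSet, sum_insert (by simp), sum_image fun i _ j _ h => by simpa using h,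
    ncard_neighborSet_inl_last]
  simp only [ncard_neighborSet_inr, sum_const, card_univ, Fintype.card_fin, smul_eq_mul]
  ring

theorem disjoint_insert_hub_copy {i j : Fin k} (hij : i ≠ j) :
    Disjoint (insert (hub i) ↑(copy i) : Set (GkVertex k)) (insert (hub j) ↑(copy j)) := by
  rw [Set.disjoint_left]
  rintro (j' | ⟨i', b⟩) hi hj <;> simp [hub, Fin.ext_iff] at hi hj <;> omega

theorem exists_closed_subset_insert_hub_copy {H : SimpleGraph (GkVertex k)} (hH : H ≤ Gk k)
    (hdeg : ∀ v, (H.neighborSet v).ncard = 2) (i : Fin k) :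
    ∃ C : Set (GkVertex k), (∀ u ∈ C, ∀ w, H.Adj u w → w ∈ C) ∧ .inr (i, 0) ∈ C ∧
      C ⊆ insert (hub i) ↑(copy i) := by
  obtain ⟨C, hC, hAC, hCA⟩ :=
    SimpleGraph.exists_forall_adj_mem_of_ncard_neighborSet_eq_two hdeg (hub_notMem_copy i)
      fun a ha => by
        obtain ⟨b, rfl⟩ := mem_copy.1 ha
        exact (SimpleGraph.neighborSet_mono hH _).trans (neighborSet_inr_subset i b)
  exact ⟨C, hC, hAC (by simp), hCA⟩

theorem lt_card_connectedComponent {H : SimpleGraph (GkVertex k)} (hH : H ≤ Gk k)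
    (hdeg : ∀ v, (H.neighborSet v).ncard = 2) : k < Nat.card H.ConnectedComponent := by
  choose C hC hmem hsub using exists_closed_subset_insert_hub_copy hH hdeg
  have hdisj : Pairwise (Disjoint on C) := fun i j hij =>
    (disjoint_insert_hub_copy hij).mono (hsub i) (hsub j)
  have hlast : ∀ i, .inl (Fin.last (k + 2)) ∉ C i := fun i h => by
    have := hsub i h
    simp [hub, Fin.ext_iff] at this
    omega
  simpa using SimpleGraph.lt_card_connectedComponent hC hdisj hmem hlast

theorem le_card_connectedComponent_of_isTwoFactor {F : (Gk k).Subgraph}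
    (hF : IsTwoFactor (Gk k) F) : k + 1 ≤ Nat.card F.coe.ConnectedComponent := by
  rw [← Nat.card_congr (F.spanningCoeEquivCoeOfSpanning hF.1).connectedComponentEquiv]
  exact lt_card_connectedComponent F.spanningCoe_le hF.2

end Gk

theorem sigma_condition_sharp_general (k : ℕ) :
    -- `G_k` is claw-free
    ClawFree (Gk k) ∧
    -- `G_k` has order `n = k² + 3k + 3`
    Fintype.card (GkVertex k) = k ^ 2 + 3 * k + 3 ∧
    -- `δ(G_k) = k + 2`
    (∀ v : GkVertex k, k + 2 ≤ ((Gk k).neighborSet v).ncard) ∧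
    (∃ v : GkVertex k, ((Gk k).neighborSet v).ncard = k + 2) ∧
    -- `α(G_k) = k + 1`
    (∀ I : Finset (GkVertex k), IsIndepFinset (Gk k) I → I.card ≤ k + 1) ∧
    (∃ I : Finset (GkVertex k), IsIndepFinset (Gk k) I ∧ I.card = k + 1) ∧
    -- hence every nonempty independent set `I` satisfies `|I| ≤ δ(I) - 1`
    (∀ I : Finset (GkVertex k), IsIndepFinset (Gk k) I → I.Nonempty →
      ∀ v ∈ I, I.card ≤ ((Gk k).neighborSet v).ncard - 1) ∧
    -- `σ_{k+1}(G_k) = n - 1`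
    (∀ I : Finset (GkVertex k), IsIndepFinset (Gk k) I → I.card = k + 1 →
      k ^ 2 + 3 * k + 2 ≤ ∑ v ∈ I, ((Gk k).neighborSet v).ncard) ∧
    (∃ I : Finset (GkVertex k), IsIndepFinset (Gk k) I ∧ I.card = k + 1 ∧
      ∑ v ∈ I, ((Gk k).neighborSet v).ncard = k ^ 2 + 3 * k + 2) ∧
    -- every 2-factor of `G_k` has at least `k + 1` cycles
    ∀ F : (Gk k).Subgraph, IsTwoFactor (Gk k) F →
      k + 1 ≤ Nat.card F.coe.ConnectedComponent := by
  refine ⟨Gk.clawFree, ?_, Gk.le_ncard_neighborSet, ⟨_, Gk.ncard_neighborSet_inl_last⟩,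
    fun _ => Gk.card_le_of_isIndepFinset, ⟨_, Gk.isIndepFinset_indepSet, Gk.card_indepSet⟩,
    ?_, ?_, ⟨_, Gk.isIndepFinset_indepSet, Gk.card_indepSet, Gk.sum_ncard_neighborSet_indepSet⟩,
    fun _ => Gk.le_card_connectedComponent_of_isTwoFactor⟩
  · simp only [Fintype.card_sum, Fintype.card_prod, Fintype.card_fin]
    ring
  · intro I hI _ v _
    have := Gk.card_le_of_isIndepFinset hI
    have := Gk.le_ncard_neighborSet v
    omega
  · intro I _ hcard
    calc k ^ 2 + 3 * k + 2 = #I • (k + 2) := by rw [hcard, smul_eq_mul]; ring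
      _ ≤ _ := card_nsmul_le_sum _ _ _ fun v _ => Gk.le_ncard_neighborSet v

/-- **Sharpness of the degree sum condition.**  For every positive integer `k`, the
claw-free graph `G_k` has order `n = k² + 3k + 3`, minimum degree `δ(G_k) = k + 2`,
independence number `α(G_k) = k + 1` (hence every nonempty independent set `I`
satisfies `|I| ≤ δ(I) - 1`), degree sum condition `σ_{k+1}(G_k) = n - 1`, and yet
every 2-factor of `G_k` has at least `k + 1` cycles; so the hypothesis
`σ_{k+1}(G) ≥ n` in the main theorem cannot be weakened to `σ_{k+1}(G) ≥ n - 1`. -/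
theorem sigma_condition_sharp (k : ℕ) (hk : 1 ≤ k) :
    -- `G_k` is claw-free
    ClawFree (Gk k) ∧
    -- `G_k` has order `n = k² + 3k + 3`
    Fintype.card (GkVertex k) = k ^ 2 + 3 * k + 3 ∧
    -- `δ(G_k) = k + 2`
    (∀ v : GkVertex k, k + 2 ≤ ((Gk k).neighborSet v).ncard) ∧
    (∃ v : GkVertex k, ((Gk k).neighborSet v).ncard = k + 2) ∧
    -- `α(G_k) = k + 1`
    (∀ I : Finset (GkVertex k), IsIndepFinset (Gk k) I → I.card ≤ k + 1) ∧
    (∃ I : Finset (GkVertex k), IsIndepFinset (Gk k) I ∧ I.card = k + 1) ∧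
    -- hence every nonempty independent set `I` satisfies `|I| ≤ δ(I) - 1`
    (∀ I : Finset (GkVertex k), IsIndepFinset (Gk k) I → I.Nonempty →
      ∀ v ∈ I, I.card ≤ ((Gk k).neighborSet v).ncard - 1) ∧
    -- `σ_{k+1}(G_k) = n - 1`
    (∀ I : Finset (GkVertex k), IsIndepFinset (Gk k) I → I.card = k + 1 →
      k ^ 2 + 3 * k + 2 ≤ ∑ v ∈ I, ((Gk k).neighborSet v).ncard) ∧
    (∃ I : Finset (GkVertex k), IsIndepFinset (Gk k) I ∧ I.card = k + 1 ∧
      ∑ v ∈ I, ((Gk k).neighborSet v).ncard = k ^ 2 + 3 * k + 2) ∧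
    -- every 2-factor of `G_k` has at least `k + 1` cycles
    ∀ F : (Gk k).Subgraph, IsTwoFactor (Gk k) F →
      k + 1 ≤ Nat.card F.coe.ConnectedComponent :=
  sigma_condition_sharp_general k
end

section
/- Let H be a graph that has a dominating system, and let 𝒟 be a dominating system of H of minimum cardinality. Then any two distinct closed trails in 𝒟 are vertex-disjoint. -/
/-- A subgraph `D` of `H` is a closed trail of `H` if it is the subgraph traced out by
a closed walk of `H` that repeats no edge. -/
def IsClosedTrailSubgraph {V : Type*} (H : SimpleGraph V) (D : H.Subgraph) : Prop :=
  ∃ (v : V) (w : H.Walk v v), w.IsTrail ∧ D = w.toSubgraph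

/-- A subgraph `D` of `H` is a star with at least three edges with center `c` if every
vertex of `D` other than `c` is a neighbor of `c`, every edge of `D` is incident with
`c`, and `D` has at least three edges. -/
def IsStarWithCenter {V : Type*} (H : SimpleGraph V) (D : H.Subgraph) (c : V) : Prop :=
  c ∈ D.verts ∧ (∀ v ∈ D.verts, v = c ∨ D.Adj c v) ∧
    (∀ e ∈ D.edgeSet, c ∈ e) ∧ 3 ≤ D.edgeSet.ncard

/-- A subgraph `D` of `H` is a star with at least three edges. -/
def IsBigStarSubgraph {V : Type*} (H : SimpleGraph V) (D : H.Subgraph) : Prop :=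
  ∃ c : V, IsStarWithCenter H D c

/-- A dominating system of `H` is a finite set `𝒟` of pairwise edge-disjoint subgraphs
of `H`, each of which is either a closed trail or a star with at least three edges,
such that every edge of `H` not belonging to any member of `𝒟` has at least one
endpoint lying on a closed trail in `𝒟`. -/
def IsDomSystem {V : Type*} (H : SimpleGraph V) (𝒟 : Set H.Subgraph) : Prop :=
  𝒟.Finite ∧
    (∀ D ∈ 𝒟, ∀ D' ∈ 𝒟, D ≠ D' → D.edgeSet ∩ D'.edgeSet = ∅) ∧
    (∀ D ∈ 𝒟, IsClosedTrailSubgraph H D ∨ IsBigStarSubgraph H D) ∧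
    ∀ e ∈ H.edgeSet, (∀ D ∈ 𝒟, e ∉ D.edgeSet) →
      ∃ D ∈ 𝒟, IsClosedTrailSubgraph H D ∧ ∃ v, v ∈ e ∧ v ∈ D.verts

/-!
Two edge-disjoint closed trails through a common vertex `x` merge into one closed trail:
rotate both closed walks to start at `x` and concatenate them. Replacing the two trails of a
dominating system by their union keeps it dominating (every vertex of either trail still lies
on a closed trail), and lowers its cardinality by one.
-/

section

open SimpleGraph

variable {V : Type*} {H : SimpleGraph V}

theorem IsClosedTrailSubgraph.sup {D D' : H.Subgraph} (hD : IsClosedTrailSubgraph H D)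
    (hD' : IsClosedTrailSubgraph H D') (hdisj : Disjoint D.edgeSet D'.edgeSet) {x : V}
    (hxD : x ∈ D.verts) (hxD' : x ∈ D'.verts) : IsClosedTrailSubgraph H (D ⊔ D') := by
  classical
  obtain ⟨v, w, hw, rfl⟩ := hD
  obtain ⟨v', w', hw', rfl⟩ := hD'
  rw [Walk.mem_verts_toSubgraph] at hxD hxD'
  refine ⟨x, (w.rotate x hxD).append (w'.rotate x hxD'), ?_, ?_⟩
  · refine (Walk.isTrail_append _ _).mpr ⟨hw.rotate hxD, hw'.rotate hxD', fun e he he' => ?_⟩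
    rw [Walk.edgeSet_toSubgraph, Walk.edgeSet_toSubgraph] at hdisj
    exact Set.disjoint_left.mp hdisj ((w.rotate_edges x hxD).mem_iff.mp he)
      ((w'.rotate_edges x hxD').mem_iff.mp he')
  · rw [Walk.toSubgraph_append, Walk.toSubgraph_rotate, Walk.toSubgraph_rotate]

theorem IsDomSystem.insert_sup_sdiff {𝒟 : Set H.Subgraph} {D D' : H.Subgraph}
    (h : IsDomSystem H 𝒟) (hD : D ∈ 𝒟) (hD' : D' ∈ 𝒟)
    (hE : IsClosedTrailSubgraph H (D ⊔ D')) :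
    IsDomSystem H (insert (D ⊔ D') (𝒟 \ {D, D'})) := by
  obtain ⟨hfin, hdisj, htype, hcover⟩ := h
  have hdisjE : ∀ C ∈ 𝒟 \ {D, D'}, C.edgeSet ∩ (D ⊔ D').edgeSet = ∅ := by
    rintro C ⟨hC, hCDD'⟩
    simp only [Set.mem_insert_iff, Set.mem_singleton_iff, not_or] at hCDD'
    rw [Subgraph.edgeSet_sup, Set.inter_union_distrib_left, hdisj C hC D hD hCDD'.1,
      hdisj C hC D' hD' hCDD'.2, Set.union_empty]
  refine ⟨hfin.sdiff.insert _, ?_, ?_, ?_⟩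
  · rintro A (rfl | hA) B (rfl | hB) hAB
    · exact absurd rfl hAB
    · rw [Set.inter_comm]
      exact hdisjE B hB
    · exact hdisjE A hA
    · exact hdisj A hA.1 B hB.1 hAB
  · rintro A (rfl | hA)
    · exact Or.inl hE
    · exact htype A hA.1
  · intro e he hfree
    have heE : e ∉ (D ⊔ D').edgeSet := hfree _ (Set.mem_insert _ _)
    rw [Subgraph.edgeSet_sup, Set.mem_union, not_or] at heE
    obtain ⟨F, hF, hFtrail, y, hye, hyF⟩ := hcover e he fun C hC => by
      by_cases hCDD' : C ∈ ({D, D'} : Set H.Subgraph)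
      · rcases hCDD' with rfl | rfl
        exacts [heE.1, heE.2]
      · exact hfree C (Set.mem_insert_of_mem _ ⟨hC, hCDD'⟩)
    by_cases hFDD' : F ∈ ({D, D'} : Set H.Subgraph)
    · refine ⟨D ⊔ D', Set.mem_insert _ _, hE, y, hye, ?_⟩
      rcases hFDD' with rfl | rfl
      exacts [Or.inl hyF, Or.inr hyF]
    · exact ⟨F, Set.mem_insert_of_mem _ ⟨hF, hFDD'⟩, hFtrail, y, hye, hyF⟩

end

theorem Set.ncard_insert_sdiff_pair_lt {α : Type*} {s : Set α} {b c : α} (hs : s.Finite)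
    (hb : b ∈ s) (hc : c ∈ s) (hbc : b ≠ c) (a : α) :
    (insert a (s \ {b, c})).ncard < s.ncard :=
  calc (insert a (s \ {b, c})).ncard ≤ (s \ {b, c}).ncard + 1 := Set.ncard_insert_le _ _
    _ < (s \ {b, c}).ncard + ({b, c} : Set α).ncard := by rw [Set.ncard_pair hbc]; omega
    _ = s.ncard := Set.ncard_sdiff_add_ncard_of_subset (Set.pair_subset hb hc) hs

theorem min_dom_system_closed_trails_vertex_disjoint_general
    {V : Type*} (H : SimpleGraph V) (𝒟 : Set H.Subgraph)
    (hdom : IsDomSystem H 𝒟)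
    (hmin : ∀ 𝒟' : Set H.Subgraph, IsDomSystem H 𝒟' → 𝒟.ncard ≤ 𝒟'.ncard) :
    ∀ D ∈ 𝒟, ∀ D' ∈ 𝒟, IsClosedTrailSubgraph H D → IsClosedTrailSubgraph H D' →
      D ≠ D' → D.verts ∩ D'.verts = ∅ := by
  rintro D hD D' hD' hDtrail hD'trail hne
  by_contra hmeet
  obtain ⟨x, hxD, hxD'⟩ := Set.nonempty_iff_ne_empty.mpr hmeet
  have hdisj : Disjoint D.edgeSet D'.edgeSet :=
    Set.disjoint_iff_inter_eq_empty.mpr (hdom.2.1 D hD D' hD' hne)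
  have hmerged := hdom.insert_sup_sdiff hD hD' (hDtrail.sup hD'trail hdisj hxD hxD')
  exact (hmin _ hmerged).not_gt (Set.ncard_insert_sdiff_pair_lt hdom.1 hD hD' hne _)

/-- Let `𝒟` be a dominating system of `H` of minimum cardinality.  Then any two
distinct closed trails in `𝒟` are vertex-disjoint. -/
theorem min_dom_system_closed_trails_vertex_disjoint
    {V : Type*} [Fintype V] (H : SimpleGraph V) (𝒟 : Set H.Subgraph)
    (hdom : IsDomSystem H 𝒟)
    (hmin : ∀ 𝒟' : Set H.Subgraph, IsDomSystem H 𝒟' → 𝒟.ncard ≤ 𝒟'.ncard) :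
    ∀ D ∈ 𝒟, ∀ D' ∈ 𝒟, IsClosedTrailSubgraph H D → IsClosedTrailSubgraph H D' →
      D ≠ D' → D.verts ∩ D'.verts = ∅ :=
  min_dom_system_closed_trails_vertex_disjoint_general H 𝒟 hdom hmin
end

section
/- Let H be a graph that has a dominating system, and let 𝒟 be a dominating system of H of minimum cardinality. Then no center of a star in 𝒟 lies on a closed trail in 𝒟; that is, the set of vertices covered by the closed trails of 𝒟 is disjoint from the set of centers of the stars of 𝒟. -/
/-- A trail whose edges all pass through a fixed vertex `c` has length at most 2. -/
lemma trail_through_center_length_le_two {V : Type*} {H : SimpleGraph V} {c : V} :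
    ∀ {a b : V} (w : H.Walk a b), w.IsTrail → (∀ e ∈ w.edges, c ∈ e) → w.length ≤ 2 := by
  intro a b w
  match w with
  | .nil => intros; simp
  | .cons h .nil => intros; simp
  | .cons h (.cons h' .nil) => intros; simp
  | .cons (v := x) h (.cons (v := y) h' (.cons (v := z) h'' r)) =>
    intro ht hc
    exfalso
    have hedges : (SimpleGraph.Walk.cons h (SimpleGraph.Walk.cons h'
        (SimpleGraph.Walk.cons h'' r))).edges
        = s(a, x) :: s(x, y) :: s(y, z) :: r.edges := rfl
    have hnd := ht.edges_nodup
    rw [hedges] at hnd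
    have h1 : c ∈ s(a, x) := hc _ (by rw [hedges]; simp)
    have h2 : c ∈ s(x, y) := hc _ (by rw [hedges]; simp)
    have h3 : c ∈ s(y, z) := hc _ (by rw [hedges]; simp)
    rw [Sym2.mem_iff] at h1 h2 h3
    simp only [List.nodup_cons, List.mem_cons, not_or] at hnd
    by_cases hx : x = c
    · have hy : y ≠ c := fun h => (H.ne_of_adj h') (hx.trans h.symm)
      have hz : z = c := by
        rcases h3 with h3 | h3
        · exact absurd h3.symm hy
        · exact h3.symm
      have heq : s(x, y) = s(y, z) := by rw [hx, hz]; exact Sym2.eq_swap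
      exact hnd.2.1.1 heq
    · have ha : a = c := by
        rcases h1 with h1 | h1
        · exact h1.symm
        · exact absurd h1.symm hx
      have hy : y = c := by
        rcases h2 with h2 | h2
        · exact absurd h2.symm hx
        · exact h2.symm
      have heq : s(a, x) = s(x, y) := by rw [ha, hy]; exact Sym2.eq_swap
      exact hnd.1.1 heq

/-- A closed-trail subgraph cannot be a star with at least three edges. -/
lemma not_closed_trail_and_big_star {V : Type*} {H : SimpleGraph V} {D : H.Subgraph}
    (h1 : IsClosedTrailSubgraph H D) (h2 : IsBigStarSubgraph H D) : False := by
  obtain ⟨v, w, ht, rfl⟩ := h1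
  obtain ⟨c, -, -, hinc, hcard⟩ := h2
  classical
  have hedge : w.toSubgraph.edgeSet = {e | e ∈ w.edges} :=
    SimpleGraph.Walk.edgeSet_toSubgraph w
  have hlen : w.length ≤ 2 := by
    refine trail_through_center_length_le_two (c := c) w ht fun e he => ?_
    exact hinc e (by rw [hedge]; exact he)
  have hsub : w.toSubgraph.edgeSet = ↑w.edges.toFinset := by
    rw [hedge]; ext e; simp [List.mem_toFinset]
  have : w.toSubgraph.edgeSet.ncard ≤ w.length := by
    rw [hsub, Set.ncard_coe_finset]
    calc w.edges.toFinset.card ≤ w.edges.length := w.edges.toFinset_card_le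
      _ = w.length := w.length_edges
  omega

/-- Let `𝒟` be a dominating system of `H` of minimum cardinality.  Then no center of
a star in `𝒟` lies on a closed trail in `𝒟`. -/
theorem min_dom_system_star_centers_off_closed_trails
    {V : Type*} [Fintype V] (H : SimpleGraph V) (𝒟 : Set H.Subgraph)
    (hdom : IsDomSystem H 𝒟)
    (hmin : ∀ 𝒟' : Set H.Subgraph, IsDomSystem H 𝒟' → 𝒟.ncard ≤ 𝒟'.ncard) :
    ∀ D ∈ 𝒟, ∀ D' ∈ 𝒟, ∀ c : V, IsStarWithCenter H D c →
      IsClosedTrailSubgraph H D' → c ∉ D'.verts := by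
  intro D hD D' hD' c hstar hct hcv
  obtain ⟨hfin, hdisj, htyp, hdomin⟩ := hdom
  have hDD' : D ≠ D' := by
    rintro rfl
    exact not_closed_trail_and_big_star hct ⟨c, hstar⟩
  -- 𝒟 \ {D} is a dominating system
  have hdom' : IsDomSystem H (𝒟 \ {D}) := by
    refine ⟨hfin.subset Set.diff_subset, ?_, ?_, ?_⟩
    · intro E hE E' hE' hne
      exact hdisj E hE.1 E' hE'.1 hne
    · intro E hE
      exact htyp E hE.1
    · intro e he hnotin
      by_cases heD : e ∈ D.edgeSet
      · refine ⟨D', ⟨hD', fun h => hDD' h.symm⟩, hct, c, hstar.2.2.1 e heD, hcv⟩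
      · have hnone : ∀ E ∈ 𝒟, e ∉ E.edgeSet := by
          intro E hE
          by_cases hED : E = D
          · exact hED ▸ heD
          · exact hnotin E ⟨hE, hED⟩
        obtain ⟨E, hE, hEct, hv⟩ := hdomin e he hnone
        have hED : E ≠ D := by
          rintro rfl
          exact not_closed_trail_and_big_star hEct ⟨c, hstar⟩
        exact ⟨E, ⟨hE, hED⟩, hEct, hv⟩
  have hlt : (𝒟 \ {D}).ncard < 𝒟.ncard :=
    Set.ncard_diff_singleton_lt_of_mem hD hfin
  exact absurd (hmin _ hdom') (not_le.mpr hlt)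
end
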